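/- arXiv:2304.12551 — 6 statements merged into one kernel-verified Lean document; each statement's English description precedes it below -/
import Mathlib

section
/- Let H be a Hilbert space of functions contained in C_b(X) with ‖f‖_∞ ≤ C_H ‖f‖_H. Let V₁ : ℂ^K → H with ‖V₁‖_{2→∞} finite, V₂ : ℓ̃² → H an isometry, and Y : ℂ^K → ℓ̃² with ‖Y‖_{2→ℓ̃²} < 1/C_H, where ℓ̃² carries a norm satisfying C_H‖l‖_{ℓ̃²} ≥ ‖l‖_{ℓ²}. Then ‖V₁ - (V₁ + V₂Y)(I + Y*Y)^{-1/2}‖_{2→∞} ≤ C_H (‖V₁‖_{2→∞} + 1) ‖Y‖_{2→ℓ̃²}. -/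
/-!
With `T = e ∘ Y`, the hypothesis says `S² = (1 + T*T)⁻¹`, so the positive operator `S` is a
contraction and `1 - S² = T*T S²` has norm at most `‖T‖²`. For `0 ≤ s ≤ 1` one has
`(1 - s)² ≤ 1 - s²`, hence `‖1 - S‖ ≤ ‖T‖ ≤ C_H ‖Y‖`. The estimate then follows from
`V₁ - (V₁ + V₂Y)S = V₁(1 - S) - V₂YS`, using `‖ι‖ ≤ C_H` and `‖V₂‖ ≤ 1`.
-/

open ContinuousLinearMap
open scoped InnerProductSpace

namespace ContinuousLinearMap

variable {𝕜 E F : Type*} [RCLike 𝕜] [NormedAddCommGroup E] [InnerProductSpace 𝕜 E]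
  [NormedAddCommGroup F] [InnerProductSpace 𝕜 F] {S A : E →L[𝕜] E}

theorem IsPositive.norm_apply_sq_eq_re_inner (hS : S.IsPositive) (x : E) :
    ‖S x‖ ^ 2 = RCLike.re ⟪x, S (S x)⟫_𝕜 := by
  rw [← hS.inner_left_eq_inner_right, inner_self_eq_norm_sq]

theorem IsPositive.norm_le_one_of_one_add_mul_mul_self_eq_one (hS : S.IsPositive)
    (hA : A.IsPositive) (h : (1 + A) * (S * S) = 1) : ‖S‖ ≤ 1 := by
  refine opNorm_le_bound _ zero_le_one fun x => ?_
  obtain ⟨y, hy⟩ : ∃ y, S (S x) = y := ⟨_, rfl⟩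
  have hx : x = y + A y := by simpa [hy] using (congrArg (· x) h).symm
  have hSx : ‖S x‖ ^ 2 = ‖y‖ ^ 2 + RCLike.re ⟪y, A y⟫_𝕜 := by
    rw [hS.norm_apply_sq_eq_re_inner, hy, ← inner_re_symm (𝕜 := 𝕜), hx, inner_add_right, map_add,
      inner_self_eq_norm_sq]
  have hx' : ‖x‖ ^ 2 = ‖y‖ ^ 2 + 2 * RCLike.re ⟪y, A y⟫_𝕜 + ‖A y‖ ^ 2 := by
    rw [hx, norm_add_sq (𝕜 := 𝕜)]
  have hAy := hA.re_inner_nonneg_right y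
  rw [one_mul, ← sq_le_sq₀ (norm_nonneg _) (norm_nonneg _)]
  nlinarith [sq_nonneg ‖A y‖]

theorem IsPositive.norm_apply_sq_le_re_inner (hS : S.IsPositive) (hS₁ : ‖S‖ ≤ 1) (x : E) :
    ‖S x‖ ^ 2 ≤ RCLike.re ⟪x, S x⟫_𝕜 := by
  have hpos := hS.re_inner_nonneg_right (x - S x)
  have hSSx : RCLike.re ⟪S x, S (S x)⟫_𝕜 ≤ ‖S x‖ ^ 2 :=
    calc RCLike.re ⟪S x, S (S x)⟫_𝕜 ≤ ‖S x‖ * ‖S (S x)‖ := re_inner_le_norm _ _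
      _ ≤ ‖S x‖ * (1 * ‖S x‖) := by gcongr; exact S.le_of_opNorm_le hS₁ _
      _ = ‖S x‖ ^ 2 := by ring
  rw [map_sub, inner_sub_left, inner_sub_right, inner_sub_right, map_sub, map_sub, map_sub,
    ← hS.norm_apply_sq_eq_re_inner, ← hS.inner_left_eq_inner_right, inner_self_eq_norm_sq] at hpos
  linarith [inner_re_symm (𝕜 := 𝕜) x (S x)]

theorem IsPositive.norm_one_sub_le (hS : S.IsPositive) (hS₁ : ‖S‖ ≤ 1) {c : ℝ} (hc : 0 ≤ c)
    (h : ‖1 - S * S‖ ≤ c ^ 2) : ‖1 - S‖ ≤ c := by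
  refine opNorm_le_bound _ hc fun x => ?_
  have hsq : ‖(1 - S) x‖ ^ 2 ≤ (c * ‖x‖) ^ 2 :=
    calc ‖(1 - S) x‖ ^ 2 = ‖x‖ ^ 2 - 2 * RCLike.re ⟪x, S x⟫_𝕜 + ‖S x‖ ^ 2 := norm_sub_sq _ _
      _ ≤ ‖x‖ ^ 2 - ‖S x‖ ^ 2 := by linarith [hS.norm_apply_sq_le_re_inner hS₁ x]
      _ = RCLike.re ⟪x, (1 - S * S) x⟫_𝕜 := by
        rw [hS.norm_apply_sq_eq_re_inner, sub_apply, one_apply_eq_self, mul_apply_eq_comp,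
          inner_sub_right, map_sub, inner_self_eq_norm_sq]
      _ ≤ ‖x‖ * (c ^ 2 * ‖x‖) :=
        (re_inner_le_norm _ _).trans (by gcongr; exact le_of_opNorm_le _ h _)
      _ = (c * ‖x‖) ^ 2 := by ring
  exact (sq_le_sq₀ (norm_nonneg _) (by positivity)).1 hsq

theorem IsPositive.norm_one_sub_le_of_one_add_adjoint_comp_self_mul_eq_one [CompleteSpace E]
    [CompleteSpace F] (hS : S.IsPositive) (T : E →L[𝕜] F)
    (h : (1 + adjoint T ∘L T) * (S * S) = 1) : ‖1 - S‖ ≤ ‖T‖ := by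
  have hS₁ := hS.norm_le_one_of_one_add_mul_mul_self_eq_one (isPositive_adjoint_comp_self T) h
  refine hS.norm_one_sub_le hS₁ (norm_nonneg T) ?_
  have hsub : 1 - S * S = (adjoint T ∘L T) * (S * S) := by
    rw [← h, add_mul, one_mul, add_sub_cancel_left]
  calc ‖1 - S * S‖ ≤ ‖adjoint T ∘L T‖ * (‖S‖ * ‖S‖) := by
        rw [hsub]; exact (norm_mul_le _ _).trans (by gcongr; exact norm_mul_le _ _)
    _ ≤ ‖T‖ * ‖T‖ * (1 * 1) := by rw [norm_adjoint_comp_self]; gcongr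
    _ = ‖T‖ ^ 2 := by ring

end ContinuousLinearMap

theorem stmt5_general {X : Type*} [TopologicalSpace X]
    {H G : Type*} [NormedAddCommGroup H] [InnerProductSpace ℂ H] [CompleteSpace H]
    [NormedAddCommGroup G] [InnerProductSpace ℂ G] [CompleteSpace G]
    (K : ℕ) (CH : ℝ) (hCH : 0 < CH)
    (ι : H →L[ℂ] BoundedContinuousFunction X ℂ)
    (hι : ∀ h : H, ‖ι h‖ ≤ CH * ‖h‖)
    (V₁ : EuclideanSpace ℂ (Fin K) →L[ℂ] H)
    (V₂ : G →L[ℂ] H) (hV₂ : ∀ g, ‖V₂ g‖ = ‖g‖)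
    (e : G →L[ℂ] lp (fun _ : ℕ => ℂ) 2) (he : ∀ g, ‖e g‖ ≤ CH * ‖g‖)
    (Y : EuclideanSpace ℂ (Fin K) →L[ℂ] G)
    (S : EuclideanSpace ℂ (Fin K) →L[ℂ] EuclideanSpace ℂ (Fin K))
    (hSpos : S.IsPositive)
    (hS2 : (1 + adjoint (e ∘L Y) ∘L (e ∘L Y)) * (S * S) = 1) :
    ‖ι ∘L (V₁ - (V₁ + V₂ ∘L Y) ∘L S)‖ ≤ CH * (‖ι ∘L V₁‖ + 1) * ‖Y‖ := by
  have hS₁ : ‖S‖ ≤ 1 :=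
    hSpos.norm_le_one_of_one_add_mul_mul_self_eq_one (isPositive_adjoint_comp_self _) hS2
  have hι₁ : ‖ι‖ ≤ CH := opNorm_le_bound _ hCH.le hι
  have he₁ : ‖e‖ ≤ CH := opNorm_le_bound _ hCH.le he
  have hV₂₁ : ‖V₂‖ ≤ 1 := opNorm_le_bound _ zero_le_one fun g => by rw [hV₂, one_mul]
  have hOneSub : ‖1 - S‖ ≤ CH * ‖Y‖ :=
    (hSpos.norm_one_sub_le_of_one_add_adjoint_comp_self_mul_eq_one _ hS2).trans
      ((opNorm_comp_le e Y).trans (by gcongr))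
  have hsplit : ι ∘L (V₁ - (V₁ + V₂ ∘L Y) ∘L S) = (ι ∘L V₁) ∘L (1 - S) - ι ∘L V₂ ∘L Y ∘L S := by
    refine ContinuousLinearMap.ext fun x => ?_
    simp only [sub_apply, add_apply, comp_apply, one_apply_eq_self, map_sub, map_add]
    abel
  calc ‖ι ∘L (V₁ - (V₁ + V₂ ∘L Y) ∘L S)‖
      ≤ ‖ι ∘L V₁‖ * ‖1 - S‖ + ‖ι‖ * (‖V₂‖ * (‖Y‖ * ‖S‖)) := by
        rw [hsplit]
        refine norm_sub_le_of_le (opNorm_comp_le _ _) ((opNorm_comp_le _ _).trans ?_)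
        gcongr
        exact (opNorm_comp_le _ _).trans (by gcongr; exact opNorm_comp_le _ _)
    _ ≤ ‖ι ∘L V₁‖ * (CH * ‖Y‖) + CH * (1 * (‖Y‖ * 1)) := by gcongr
    _ = CH * (‖ι ∘L V₁‖ + 1) * ‖Y‖ := by ring

/-- Uniform consistency error bound: if `‖Y‖ < 1/C_H` and `S = (I + Y*Y)^{-1/2}` (adjoint
taken after mapping into `ℓ²`), then
`‖V₁ - (V₁ + V₂Y)(I + Y*Y)^{-1/2}‖_{2→∞} ≤ C_H (‖V₁‖_{2→∞} + 1) ‖Y‖`.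
Here the `2→∞` norms are operator norms into the bounded continuous functions, via the
embedding `ι` of the Hilbert space `H` of functions, which satisfies `‖ι h‖_∞ ≤ C_H ‖h‖_H`;
`V₂ : ℓ̃² → H` is an isometry, and `e : ℓ̃² → ℓ²` realizes the `ℓ²` norm with
`‖e g‖_{ℓ²} ≤ C_H ‖g‖_{ℓ̃²}`. -/
theorem stmt5 {X : Type*} [TopologicalSpace X]
    {H G : Type*} [NormedAddCommGroup H] [InnerProductSpace ℂ H] [CompleteSpace H]
    [NormedAddCommGroup G] [InnerProductSpace ℂ G] [CompleteSpace G]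
    (K : ℕ) (CH : ℝ) (hCH : 0 < CH)
    (ι : H →L[ℂ] BoundedContinuousFunction X ℂ)
    (hι : ∀ h : H, ‖ι h‖ ≤ CH * ‖h‖)
    (V₁ : EuclideanSpace ℂ (Fin K) →L[ℂ] H)
    (V₂ : G →L[ℂ] H) (hV₂ : ∀ g, ‖V₂ g‖ = ‖g‖)
    (e : G →L[ℂ] lp (fun _ : ℕ => ℂ) 2) (he : ∀ g, ‖e g‖ ≤ CH * ‖g‖)
    (Y : EuclideanSpace ℂ (Fin K) →L[ℂ] G) (hY : ‖Y‖ < 1 / CH)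
    (S : EuclideanSpace ℂ (Fin K) →L[ℂ] EuclideanSpace ℂ (Fin K))
    (hSpos : S.IsPositive)
    (hS1 : S * S * (1 + adjoint (e ∘L Y) ∘L (e ∘L Y)) = 1)
    (hS2 : (1 + adjoint (e ∘L Y) ∘L (e ∘L Y)) * (S * S) = 1) :
    ‖ι ∘L (V₁ - (V₁ + V₂ ∘L Y) ∘L S)‖ ≤ CH * (‖ι ∘L V₁‖ + 1) * ‖Y‖ :=
  stmt5_general K CH hCH ι hι V₁ V₂ hV₂ e he Y S hSpos hS2
end

section
/- Let ℓ̃² be a Hilbert space, T₁₁ = diag(λ₁,…,λ_K) with λ₁ ≥ … ≥ λ_K, and T₂₂ : ℓ̃² → ℓ̃² a self-adjoint bounded operator with operator norm at most λ_{K+1} < λ_K. Then for every Hilbert-Schmidt operator Y : ℂ^K → ℓ̃², ‖T₂₂Y - YT₁₁‖_{HS} ≥ (λ_K - λ_{K+1})‖Y‖_{HS}. -/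
/-!
Column by column: with `y = Y eᵢ`, the reverse triangle inequality gives
`‖T₂₂ y - λᵢ y‖ ≥ λᵢ‖y‖ - ‖T₂₂‖‖y‖ ≥ (λ_K - λ_{K+1})‖y‖`, and the Hilbert–Schmidt norm is the
`ℓ²` norm of the columns.
-/

/-- Hilbert–Schmidt norm of an operator from `ℂ^K` (finite sum over the standard basis). -/
noncomputable def hsNorm {K : ℕ} {G : Type*} [NormedAddCommGroup G] [InnerProductSpace ℂ G]
    (Y : EuclideanSpace ℂ (Fin K) →L[ℂ] G) : ℝ :=
  Real.sqrt (∑ i, ‖Y (EuclideanSpace.single i 1)‖ ^ 2)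

theorem Matrix.toEuclideanCLM_diagonal_single {𝕜 n : Type*} [RCLike 𝕜] [Fintype n] [DecidableEq n]
    (d : n → 𝕜) (i : n) (c : 𝕜) :
    Matrix.toEuclideanCLM (𝕜 := 𝕜) (Matrix.diagonal d) (EuclideanSpace.single i c)
      = d i • EuclideanSpace.single i c := by
  rw [EuclideanSpace.single, ← PiLp.toLp_single, Matrix.toEuclideanCLM_toLp,
    Matrix.diagonal_mulVec_single, ← smul_eq_mul, Pi.single_smul', WithLp.toLp_smul, PiLp.toLp_single]

theorem mul_norm_sub_opNorm_le_norm_apply_sub_smul {𝕜 E : Type*} [NontriviallyNormedField 𝕜]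
    [SeminormedAddCommGroup E] [NormedSpace 𝕜 E] (T : E →L[𝕜] E) (μ : 𝕜) (y : E) :
    (‖μ‖ - ‖T‖) * ‖y‖ ≤ ‖T y - μ • y‖ :=
  calc (‖μ‖ - ‖T‖) * ‖y‖ ≤ ‖μ • y‖ - ‖T y‖ := by
        rw [norm_smul, sub_mul]; gcongr; exact T.le_opNorm y
    _ ≤ ‖T y - μ • y‖ := by rw [norm_sub_rev]; exact norm_sub_norm_le _ _

theorem mul_hsNorm_le_hsNorm {K : ℕ} {G G' : Type*} [NormedAddCommGroup G] [InnerProductSpace ℂ G]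
    [NormedAddCommGroup G'] [InnerProductSpace ℂ G']
    {A : EuclideanSpace ℂ (Fin K) →L[ℂ] G} {B : EuclideanSpace ℂ (Fin K) →L[ℂ] G'} {c : ℝ}
    (hc : 0 ≤ c) (h : ∀ i, c * ‖A (EuclideanSpace.single i 1)‖ ≤ ‖B (EuclideanSpace.single i 1)‖) :
    c * hsNorm A ≤ hsNorm B := by
  rw [hsNorm, hsNorm, ← Real.sqrt_sq hc, ← Real.sqrt_mul (sq_nonneg c), Finset.mul_sum]
  gcongr with i
  rw [← mul_pow]
  exact pow_le_pow_left₀ (by positivity) (h i) 2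

theorem stmt8_general {G : Type*} [NormedAddCommGroup G] [InnerProductSpace ℂ G]
    (K : ℕ) (lam : Fin K → ℝ) (lamK lamK1 : ℝ)
    (hmin : ∀ i, lamK ≤ lam i)
    (T₂₂ : G →L[ℂ] G)
    (hnorm : ‖T₂₂‖ ≤ lamK1) (hgap : lamK1 < lamK)
    (Y : EuclideanSpace ℂ (Fin K) →L[ℂ] G) :
    (lamK - lamK1) * hsNorm Y
      ≤ hsNorm (T₂₂ ∘L Y - Y ∘L Matrix.toEuclideanCLM (𝕜 := ℂ)
          (Matrix.diagonal fun i => (lam i : ℂ))) := by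
  refine mul_hsNorm_le_hsNorm (by linarith) fun i => ?_
  have hlam : ‖(lam i : ℂ)‖ = lam i := by
    rw [Complex.norm_real, Real.norm_of_nonneg]
    linarith [hmin i, norm_nonneg T₂₂]
  rw [sub_apply, ContinuousLinearMap.comp_apply, ContinuousLinearMap.comp_apply,
    Matrix.toEuclideanCLM_diagonal_single, map_smul]
  calc (lamK - lamK1) * ‖Y (EuclideanSpace.single i 1)‖
      ≤ (‖(lam i : ℂ)‖ - ‖T₂₂‖) * ‖Y (EuclideanSpace.single i 1)‖ := by
        gcongr; linarith [hmin i]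
    _ ≤ _ := mul_norm_sub_opNorm_le_norm_apply_sub_smul T₂₂ _ _

/-- If `T₂₂` is self-adjoint with `‖T₂₂‖ ≤ λ_{K+1} < λ_K` and `T₁₁ = diag(λ₁,…,λ_K)` with
`λ_K` the smallest diagonal entry, then `‖T₂₂Y - YT₁₁‖_HS ≥ (λ_K - λ_{K+1}) ‖Y‖_HS` for every
Hilbert–Schmidt `Y : ℂ^K → ℓ̃²`. -/
theorem stmt8 {G : Type*} [NormedAddCommGroup G] [InnerProductSpace ℂ G] [CompleteSpace G]
    (K : ℕ) (lam : Fin K → ℝ) (lamK lamK1 : ℝ)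
    (hanti : Antitone lam) (hmin : ∀ i, lamK ≤ lam i)
    (T₂₂ : G →L[ℂ] G) (hsa : IsSelfAdjoint T₂₂)
    (hnorm : ‖T₂₂‖ ≤ lamK1) (hgap : lamK1 < lamK)
    (Y : EuclideanSpace ℂ (Fin K) →L[ℂ] G) :
    (lamK - lamK1) * hsNorm Y
      ≤ hsNorm (T₂₂ ∘L Y - Y ∘L Matrix.toEuclideanCLM (𝕜 := ℂ)
          (Matrix.diagonal fun i => (lam i : ℂ))) :=
  stmt8_general K lam lamK lamK1 hmin T₂₂ hnorm hgap Y
end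

section
/- With the same setup as before (continuous kernel k with 0 < κ_l ≤ k ≤ κ_u, sample points X₁,…,Xₙ, Lₙ and T̂ₙ as defined): if (λ̂, v) is an eigenpair of the matrix Lₙ with λ̂ ≠ 0, then the function f̂(x) = (1/(λ̂ n)) ∑ᵢ k(x,Xᵢ) vᵢ / (dₙ(x)^{1/2} dₙ(Xᵢ)^{1/2}) is a bounded continuous function satisfying T̂ₙ f̂ = λ̂ f̂, and f̂(Xᵢ) = vᵢ for all i. -/
/-!
Write `w(x, y) = k(x, y) / √(dₙ(x) dₙ(y))` and `(S c)(x) = (1/n) ∑ⱼ w(x, Xⱼ) cⱼ` for sample values `c`.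
Then `T̂ₙ f = S (f ∘ X)`, `Lₙ v = (S v) ∘ X` and `f̂ = S v / λ̂`. The eigen-equation `Lₙ v = λ̂ v` gives
`f̂ ∘ X = v`, hence `T̂ₙ f̂ = S v = λ̂ f̂`; none of this uses anything about `w`. Continuity and
boundedness of `f̂` come from `dₙ ≥ κ_l > 0`, which makes `w(·, Xⱼ)` continuous and bounded by `κ_u / κ_l`.
-/

open Finset

section EmpiricalKernelOp

variable {X : Type*} {n : ℕ}

noncomputable def empiricalKernelOp (w : X → X → ℝ) (Xp : Fin n → X) (c : Fin n → ℝ) (x : X) : ℝ :=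
  (∑ j, w x (Xp j) * c j) / n

noncomputable def nystromExtension (w : X → X → ℝ) (Xp : Fin n → X) (lam : ℝ) (v : Fin n → ℝ)
    (x : X) : ℝ :=
  empiricalKernelOp w Xp v x / lam

variable {w : X → X → ℝ} {Xp : Fin n → X} {lam : ℝ} {v : Fin n → ℝ}

theorem nystromExtension_comp_eq (hlam : lam ≠ 0)
    (heig : ∀ i, empiricalKernelOp w Xp v (Xp i) = lam * v i) :
    nystromExtension w Xp lam v ∘ Xp = v := by
  funext i
  rw [Function.comp_apply, nystromExtension, heig, mul_div_cancel_left₀ _ hlam]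

theorem empiricalKernelOp_nystromExtension (hlam : lam ≠ 0)
    (heig : ∀ i, empiricalKernelOp w Xp v (Xp i) = lam * v i) :
    empiricalKernelOp w Xp (nystromExtension w Xp lam v ∘ Xp)
      = fun x => lam * nystromExtension w Xp lam v x := by
  funext x
  rw [nystromExtension_comp_eq hlam heig, nystromExtension, mul_div_cancel₀ _ hlam]

theorem continuous_empiricalKernelOp [TopologicalSpace X]
    (hw : ∀ j, Continuous fun x => w x (Xp j)) (c : Fin n → ℝ) :
    Continuous (empiricalKernelOp w Xp c) :=
  (continuous_finsetSum _ fun j _ => (hw j).mul continuous_const).div_const _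

theorem abs_empiricalKernelOp_le {B : ℝ} (hw : ∀ x j, |w x (Xp j)| ≤ B) (c : Fin n → ℝ) (x : X) :
    |empiricalKernelOp w Xp c x| ≤ B * (∑ j, |c j|) / n := by
  rw [empiricalKernelOp, abs_div, Nat.abs_cast, mul_sum]
  gcongr
  refine (abs_sum_le_sum_abs _ _).trans (sum_le_sum fun j _ => ?_)
  rw [abs_mul]
  exact mul_le_mul_of_nonneg_right (hw x j) (abs_nonneg _)

theorem continuous_nystromExtension [TopologicalSpace X]
    (hw : ∀ j, Continuous fun x => w x (Xp j)) : Continuous (nystromExtension w Xp lam v) :=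
  (continuous_empiricalKernelOp hw v).div_const lam

theorem abs_nystromExtension_le {B : ℝ} (hw : ∀ x j, |w x (Xp j)| ≤ B) (x : X) :
    |nystromExtension w Xp lam v x| ≤ B * (∑ j, |v j|) / n / |lam| := by
  rw [nystromExtension, abs_div]
  exact div_le_div_of_nonneg_right (abs_empiricalKernelOp_le hw v x) (abs_nonneg _)

end EmpiricalKernelOp

section NormalizedKernel

variable {X : Type*}

noncomputable def normalizedKernel (k : X → X → ℝ) (d : X → ℝ) (x y : X) : ℝ :=
  k x y / (Real.sqrt (d x) * Real.sqrt (d y))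

variable {k : X → X → ℝ} {d : X → ℝ}

theorem continuous_normalizedKernel_left [TopologicalSpace X] (hk : ∀ y, Continuous fun x => k x y)
    (hd : Continuous d) (hpos : ∀ x, 0 < d x) (y : X) :
    Continuous fun x => normalizedKernel k d x y :=
  (hk y).div ((Real.continuous_sqrt.comp hd).mul continuous_const)
    fun x => (mul_pos (Real.sqrt_pos.2 (hpos x)) (Real.sqrt_pos.2 (hpos y))).ne'

theorem abs_normalizedKernel_le {a B : ℝ} (ha : 0 < a) (hd : ∀ x, a ≤ d x)
    (hk : ∀ x y, |k x y| ≤ B) (x y : X) :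
    |normalizedKernel k d x y| ≤ B / a := by
  have hsqrt : a ≤ Real.sqrt (d x) * Real.sqrt (d y) := by
    rw [← Real.sqrt_mul (ha.trans_le (hd x)).le]
    exact Real.le_sqrt_of_sq_le (by nlinarith [hd x, hd y])
  rw [normalizedKernel, abs_div, abs_of_pos (ha.trans_le hsqrt)]
  exact div_le_div₀ ((abs_nonneg _).trans (hk x y)) (hk x y) ha hsqrt

end NormalizedKernel

theorem le_sum_div_of_forall_le {n : ℕ} (hn : 0 < n) {a : ℝ} {f : Fin n → ℝ}
    (h : ∀ j, a ≤ f j) : a ≤ (∑ j, f j) / n := by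
  rw [le_div_iff₀ (by exact_mod_cast hn)]
  simpa [mul_comm] using card_nsmul_le_sum univ f a fun j _ => h j

theorem stmt10_general (p : ℕ) (Ω : Set (EuclideanSpace ℝ (Fin p)))
    (k : Ω → Ω → ℝ) (hk : Continuous fun q : Ω × Ω => k q.1 q.2)
    (κl κu : ℝ) (hκl : 0 < κl) (hbd : ∀ x y, κl ≤ k x y ∧ k x y ≤ κu)
    (n : ℕ) (Xp : Fin n → Ω)
    (dn : Ω → ℝ) (hdn : ∀ x, dn x = (∑ j, k x (Xp j)) / n)
    (Tn : (Ω → ℝ) → Ω → ℝ)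
    (hTn : ∀ f x, Tn f x
      = (∑ j, k x (Xp j) * f (Xp j) / (Real.sqrt (dn x) * Real.sqrt (dn (Xp j)))) / n)
    (Lmat : Matrix (Fin n) (Fin n) ℝ)
    (hL : ∀ i j, Lmat i j
      = k (Xp i) (Xp j) / (n * Real.sqrt (dn (Xp i)) * Real.sqrt (dn (Xp j))))
    (lam : ℝ) (hlam : lam ≠ 0) (v : Fin n → ℝ)
    (heig : Lmat.mulVec v = fun i => lam * v i)
    (fhat : Ω → ℝ)
    (hfhat : ∀ x, fhat x
      = (∑ i, k x (Xp i) * v i / (Real.sqrt (dn x) * Real.sqrt (dn (Xp i)))) / (lam * n)) :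
    Continuous fhat ∧ (∃ M, ∀ x, |fhat x| ≤ M) ∧
      (Tn fhat = fun x => lam * fhat x) ∧ (∀ i, fhat (Xp i) = v i) := by
  set w := normalizedKernel k dn
  have hT : ∀ f, Tn f = empiricalKernelOp w Xp (f ∘ Xp) := fun f => by
    funext x
    simp only [hTn, empiricalKernelOp, w, normalizedKernel, Function.comp_apply, div_mul_eq_mul_div]
  have hmulVec : ∀ i, empiricalKernelOp w Xp v (Xp i) = lam * v i := fun i => by
    rw [← congrFun heig i, Matrix.mulVec, dotProduct, empiricalKernelOp, sum_div]
    exact sum_congr rfl fun j _ => by rw [hL]; simp only [w, normalizedKernel]; ring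
  have hf : fhat = nystromExtension w Xp lam v := by
    funext x
    rw [hfhat, nystromExtension, empiricalKernelOp, div_div, mul_comm (n : ℝ)]
    simp only [w, normalizedKernel, div_mul_eq_mul_div]
  have hdeg : ∀ x (j : Fin n), κl ≤ dn x := fun x j =>
    (hdn x).symm ▸ le_sum_div_of_forall_le j.pos fun i => (hbd x (Xp i)).1
  have hk_left : ∀ y, Continuous fun x => k x y := fun y =>
    hk.comp (continuous_id.prodMk continuous_const)
  have hdn_cont : Continuous dn :=
    funext hdn ▸ (continuous_finsetSum _ fun j _ => hk_left (Xp j)).div_const _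
  have hk_abs : ∀ x y, |k x y| ≤ κu := fun x y =>
    abs_le.2 ⟨by linarith [hbd x y], (hbd x y).2⟩
  subst hf
  exact ⟨continuous_nystromExtension fun j => continuous_normalizedKernel_left hk_left hdn_cont
      (fun x => hκl.trans_le (hdeg x j)) _,
    ⟨_, abs_nystromExtension_le fun x j =>
      abs_normalizedKernel_le hκl (fun x => hdeg x j) hk_abs x (Xp j)⟩,
    hT _ ▸ empiricalKernelOp_nystromExtension hlam hmulVec,
    congrFun (nystromExtension_comp_eq hlam hmulVec)⟩

/-- The Nyström extension of an eigenvector of the normalized Laplacian matrix `Lₙ` is a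
bounded continuous eigenfunction of the empirical normalized Laplacian operator `T̂ₙ` that
agrees with the eigenvector on the sample points. -/
theorem stmt10 (p : ℕ) (Ω : Set (EuclideanSpace ℝ (Fin p)))
    (k : Ω → Ω → ℝ) (hk : Continuous fun q : Ω × Ω => k q.1 q.2)
    (hsym : ∀ x y, k x y = k y x)
    (κl κu : ℝ) (hκl : 0 < κl) (hbd : ∀ x y, κl ≤ k x y ∧ k x y ≤ κu)
    (n : ℕ) (Xp : Fin n → Ω)
    (dn : Ω → ℝ) (hdn : ∀ x, dn x = (∑ j, k x (Xp j)) / n)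
    (Tn : (Ω → ℝ) → Ω → ℝ)
    (hTn : ∀ f x, Tn f x
      = (∑ j, k x (Xp j) * f (Xp j) / (Real.sqrt (dn x) * Real.sqrt (dn (Xp j)))) / n)
    (Lmat : Matrix (Fin n) (Fin n) ℝ)
    (hL : ∀ i j, Lmat i j
      = k (Xp i) (Xp j) / (n * Real.sqrt (dn (Xp i)) * Real.sqrt (dn (Xp j))))
    (lam : ℝ) (hlam : lam ≠ 0) (v : Fin n → ℝ) (hv : v ≠ 0)
    (heig : Lmat.mulVec v = fun i => lam * v i)
    (fhat : Ω → ℝ)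
    (hfhat : ∀ x, fhat x
      = (∑ i, k x (Xp i) * v i / (Real.sqrt (dn x) * Real.sqrt (dn (Xp i)))) / (lam * n)) :
    Continuous fhat ∧ (∃ M, ∀ x, |fhat x| ≤ M) ∧
      (Tn fhat = fun x => lam * fhat x) ∧ (∀ i, fhat (Xp i) = v i) :=
  stmt10_general p Ω k hk κl κu hκl hbd n Xp dn hdn Tn hTn Lmat hL lam hlam v heig fhat hfhat
end

section
/- Let k : X × X → ℝ be a symmetric positive definite kernel (all Gram matrices positive semidefinite) with k(x,x) ≤ κ_u for all x, let ℙ be a probability measure on X, and define T : L²(X,ℙ) → L²(X,ℙ) by (Tf)(x) = ∫ h(x,y) f(y) dℙ(y), where h(x,y) = k(x,y)/√(d(x)d(y)) and d(x) = ∫ k(x,y) dℙ(y) is assumed to satisfy 0 < κ_l ≤ d(x). Then T is a positive operator: ⟨Tf, f⟩_{L²} ≥ 0 for all f ∈ L²(X,ℙ). -/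
/-!
Substituting `g = f / √d` turns the form into `Q = ∫∫ k(x,y) conj(g x) g(y)`, so it suffices that
`Re Q ≥ 0` for a bounded positive definite kernel `k` and `g ∈ L²`. For iid samples `X₁, …, Xₙ`
of `ℙ`, the Gram form `∑ᵢⱼ k(Xᵢ,Xⱼ) conj(g Xᵢ) g(Xⱼ)` has nonnegative real part, and its
expectation is `n(n-1) Q + n ∫ k(x,x) |g x|²`; dividing by `n²` and letting `n → ∞` gives
`Re Q ≥ 0`. Boundedness of `k` comes from `k(x,y)² ≤ k(x,x) k(y,y)`, read off the `2 × 2` Gram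
matrices.
-/

open MeasureTheory ComplexConjugate

def IsPosSemidefKernel {X : Type*} (k : X → X → ℂ) : Prop :=
  ∀ (n : ℕ) (x : Fin n → X) (ξ : Fin n → ℂ),
    0 ≤ (∑ i, ∑ j, k (x i) (x j) * conj (ξ i) * ξ j).re

section RealKernel

variable {X : Type*} {k : X → X → ℝ}

lemma IsPosSemidefKernel.diag_nonneg (hk : IsPosSemidefKernel fun x y => (k x y : ℂ)) (x : X) :
    0 ≤ k x x := by
  simpa using hk 1 ![x] ![1]

lemma IsPosSemidefKernel.sq_le_mul_diag (hk : IsPosSemidefKernel fun x y => (k x y : ℂ))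
    (hsym : ∀ x y, k x y = k y x) (x y : X) :
    k x y ^ 2 ≤ k x x * k y y := by
  have hquad (t : ℝ) : 0 ≤ k x x * (t * t) + 2 * k x y * t + k y y := by
    have := hk 2 ![x, y] ![t, 1]
    simp [Fin.sum_univ_two, hsym y x] at this
    linarith
  have := discrim_le_zero hquad
  rw [discrim] at this
  linarith

lemma IsPosSemidefKernel.abs_le_of_diag_le (hk : IsPosSemidefKernel fun x y => (k x y : ℂ))
    (hsym : ∀ x y, k x y = k y x) {C : ℝ} (hC : ∀ x, k x x ≤ C) (x y : X) :
    |k x y| ≤ C := by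
  have hx := hk.diag_nonneg x
  have hy := hk.diag_nonneg y
  refine abs_le_of_sq_le_sq ?_ (hx.trans (hC x))
  nlinarith [hk.sq_le_mul_diag hsym x y, hC x, hC y]

end RealKernel

lemma nonneg_of_forall_nat_mul_add_mul_nonneg {a b : ℝ}
    (h : ∀ n : ℕ, 0 ≤ n * a + n * (n - 1) * b) : 0 ≤ b := by
  by_contra! hb
  obtain ⟨N, hN⟩ := exists_nat_gt (a / -b)
  have hNb : a + N * b < 0 := by
    rw [div_lt_iff₀ (neg_pos.2 hb)] at hN
    linarith
  have := h (N + 1)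
  push_cast at this
  nlinarith

lemma sum_sum_ite_eq_const {ι : Type*} [Fintype ι] [DecidableEq ι] (D Q : ℂ) :
    ∑ i : ι, ∑ j : ι, (if i = j then D else Q) =
      Fintype.card ι * D + Fintype.card ι * (Fintype.card ι - 1) * Q := by
  have hsplit (i j : ι) : (if i = j then D else Q) = Q + if i = j then D - Q else 0 := by
    split_ifs <;> ring
  simp only [hsplit, Finset.sum_add_distrib, Finset.sum_const, Finset.sum_ite_eq,
    Finset.mem_univ, if_true, Finset.card_univ, nsmul_eq_mul]
  ring

namespace MeasureTheory

theorem MeasurePreserving.integral_comp_of_aestronglyMeasurable {α β E : Type*}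
    [MeasurableSpace α] [MeasurableSpace β] [NormedAddCommGroup E] [NormedSpace ℝ E]
    {μ : Measure α} {ν : Measure β} {f : α → β} (hf : MeasurePreserving f μ ν) {g : β → E}
    (hg : AEStronglyMeasurable g ν) :
    ∫ x, g (f x) ∂μ = ∫ y, g y ∂ν := by
  rw [← hf.map_eq] at hg ⊢
  exact (integral_map hf.measurable.aemeasurable hg).symm

lemma measurePreserving_eval_pair {ι : Type*} [Fintype ι] {α : ι → Type*}
    [∀ i, MeasurableSpace (α i)] (μ : ∀ i, Measure (α i)) [∀ i, IsProbabilityMeasure (μ i)]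
    {i j : ι} (hij : i ≠ j) :
    MeasurePreserving (fun ω : ∀ l, α l => (ω i, ω j)) (Measure.pi μ) ((μ i).prod (μ j)) := by
  classical
  refine ⟨by fun_prop, (Measure.prod_eq fun A B hA hB => ?_).symm⟩
  have hpre : (fun ω : ∀ l, α l => (ω i, ω j)) ⁻¹' A ×ˢ B =
      Set.univ.pi (Function.update (Function.update (fun _ => Set.univ) i A) j B) := by
    ext ω
    simp only [Set.mem_preimage, Set.mem_prod, Set.mem_univ_pi]
    refine ⟨fun h l => ?_, fun h => ⟨by simpa [hij] using h i, by simpa using h j⟩⟩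
    rcases eq_or_ne l j with rfl | hlj
    · simpa using h.2
    rcases eq_or_ne l i with rfl | hli
    · simpa [hlj] using h.1
    simp [hli, hlj]
  rw [Measure.map_apply (by fun_prop) (hA.prod hB), hpre, Measure.pi_pi,
    Fintype.prod_eq_mul i j hij (fun l hl => by simp [hl.1, hl.2])]
  simp [hij]

variable {X : Type*} [MeasurableSpace X] {μ : Measure X} {k : X → X → ℂ} {C : ℝ} {g : X → ℂ}

lemma MemLp.div_ofReal_of_le {p : ENNReal} {f : X → ℂ} (hf : MemLp f p μ) {h : X → ℝ}
    (hh : Measurable h) {c : ℝ} (hc : 0 < c) (hch : ∀ x, c ≤ h x) :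
    MemLp (fun x => f x / h x) p μ := by
  have hmeas : AEStronglyMeasurable (fun x => f x / h x) μ :=
    hf.1.div₀ (Complex.measurable_ofReal.comp hh).aestronglyMeasurable
  refine hf.of_le_mul (c := c⁻¹) hmeas (ae_of_all _ fun x => ?_)
  have hhx : 0 < h x := hc.trans_le (hch x)
  rw [norm_div, Complex.norm_real, Real.norm_of_nonneg hhx.le, div_eq_inv_mul]
  gcongr
  exact hch x

lemma integrable_kernel_prod [SFinite μ] (hk : Measurable (Function.uncurry k))
    (hC : ∀ x y, ‖k x y‖ ≤ C) (hg : Integrable g μ) :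
    Integrable (fun p : X × X => k p.1 p.2 * conj (g p.1) * g p.2) (μ.prod μ) := by
  have hconj : Integrable (fun x => conj (g x)) μ :=
    (Complex.conjCLE : ℂ →L[ℝ] ℂ).integrable_comp hg
  simpa only [mul_assoc] using (hconj.mul_prod hg).bdd_mul
    (f := fun p : X × X => k p.1 p.2) hk.aestronglyMeasurable (ae_of_all _ fun p => hC p.1 p.2)

lemma integrable_kernel_diag (hk : Measurable (Function.uncurry k)) (hC : ∀ x, ‖k x x‖ ≤ C)
    (hg : MemLp g 2 μ) :
    Integrable (fun x => k x x * conj (g x) * g x) μ := by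
  have hdiag : Measurable fun x => k x x := hk.comp (measurable_id.prodMk measurable_id)
  simpa only [mul_assoc, Pi.mul_apply, Pi.star_apply, Complex.star_def] using
    (hg.star.integrable_mul hg).bdd_mul hdiag.aestronglyMeasurable (ae_of_all _ hC)

lemma re_integral_nonneg_of_re_nonneg {f : X → ℂ} (hf : ∀ x, 0 ≤ (f x).re) :
    0 ≤ (∫ x, f x ∂μ).re := by
  by_cases hfi : Integrable f μ
  · rw [← RCLike.re_to_complex, ← integral_re hfi]
    exact integral_nonneg hf
  · simp [integral_undef hfi]

variable [IsProbabilityMeasure μ]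

lemma integral_pi_sum_kernel {ι : Type*} [Fintype ι] (hk : Measurable (Function.uncurry k))
    (hC : ∀ x y, ‖k x y‖ ≤ C) (hg : MemLp g 2 μ) :
    ∫ ω, ∑ i : ι, ∑ j, k (ω i) (ω j) * conj (g (ω i)) * g (ω j) ∂Measure.pi (fun _ => μ) =
      Fintype.card ι * ∫ x, k x x * conj (g x) * g x ∂μ +
        Fintype.card ι * (Fintype.card ι - 1) *
          ∫ p : X × X, k p.1 p.2 * conj (g p.1) * g p.2 ∂μ.prod μ := by
  classical
  have hdiag := integrable_kernel_diag hk (fun x => hC x x) hg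
  have hoff := integrable_kernel_prod hk hC (hg.integrable one_le_two)
  have hterm (i j : ι) :
      Integrable (fun ω : ι → X => k (ω i) (ω j) * conj (g (ω i)) * g (ω j))
          (Measure.pi fun _ => μ) ∧
        ∫ ω, k (ω i) (ω j) * conj (g (ω i)) * g (ω j) ∂Measure.pi (fun _ => μ) =
          if i = j then ∫ x, k x x * conj (g x) * g x ∂μ
          else ∫ p : X × X, k p.1 p.2 * conj (g p.1) * g p.2 ∂μ.prod μ := by
    rcases eq_or_ne i j with rfl | hij
    · have hmp := measurePreserving_eval (fun _ => μ) i
      exact ⟨hmp.integrable_comp_of_integrable hdiag, by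
        rw [if_pos rfl, hmp.integral_comp_of_aestronglyMeasurable hdiag.1]⟩
    · have hmp := measurePreserving_eval_pair (fun _ => μ) hij
      exact ⟨hmp.integrable_comp_of_integrable hoff, by
        rw [if_neg hij, hmp.integral_comp_of_aestronglyMeasurable hoff.1]⟩
  rw [integral_finsetSum _ fun i _ => integrable_finsetSum _ fun j _ => (hterm i j).1]
  simp_rw [integral_finsetSum _ fun j _ => (hterm _ j).1, (hterm _ _).2]
  exact sum_sum_ite_eq_const _ _

theorem IsPosSemidefKernel.re_integral_prod_nonneg (hpd : IsPosSemidefKernel k)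
    (hk : Measurable (Function.uncurry k)) (hC : ∀ x y, ‖k x y‖ ≤ C) (hg : MemLp g 2 μ) :
    0 ≤ (∫ p : X × X, k p.1 p.2 * conj (g p.1) * g p.2 ∂μ.prod μ).re := by
  refine nonneg_of_forall_nat_mul_add_mul_nonneg
    (a := (∫ x, k x x * conj (g x) * g x ∂μ).re) fun n => ?_
  have hsample := re_integral_nonneg_of_re_nonneg (μ := Measure.pi fun _ : Fin n => μ)
    fun ω => hpd n ω fun i => g (ω i)
  rw [integral_pi_sum_kernel hk hC hg] at hsample
  simpa [Fintype.card_fin] using hsample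

end MeasureTheory

/-- The normalized Laplacian operator `T`, given by the kernel
`h(x,y) = k(x,y)/√(d(x)d(y))` with `k` positive definite and `d` the degree function, is a
positive operator on `L²(X, ℙ)`: `⟨Tf, f⟩ ≥ 0` for every `f ∈ L²`. -/
theorem stmt11 {X : Type*} [MeasurableSpace X] (P : Measure X) [IsProbabilityMeasure P]
    (k : X → X → ℝ) (hmeas : Measurable (Function.uncurry k))
    (hsym : ∀ x y, k x y = k y x)
    (κl κu : ℝ) (hκl : 0 < κl)
    (hdiag : ∀ x, k x x ≤ κu)
    (hpd : ∀ (n : ℕ) (x : Fin n → X) (ξ : Fin n → ℂ),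
      0 ≤ (∑ i, ∑ j, (k (x i) (x j) : ℂ) * (starRingEnd ℂ) (ξ i) * ξ j).re)
    (d : X → ℝ) (hd : ∀ x, d x = ∫ y, k x y ∂P) (hdl : ∀ x, κl ≤ d x)
    (f : X → ℂ) (hf : MemLp f 2 P) :
    0 ≤ (∫ x, ∫ y,
        ((k x y / (Real.sqrt (d x) * Real.sqrt (d y)) : ℝ) : ℂ) * f y * (starRingEnd ℂ) (f x)
          ∂P ∂P).re := by
  have hkpsd : IsPosSemidefKernel fun x y => (k x y : ℂ) := hpd
  have hbdd (x y : X) : ‖(k x y : ℂ)‖ ≤ κu := by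
    simpa using hkpsd.abs_le_of_diag_le hsym hdiag x y
  have hkC : Measurable (Function.uncurry fun x y => (k x y : ℂ)) :=
    Complex.measurable_ofReal.comp hmeas
  have hdm : Measurable d := by
    rw [funext hd]
    exact hmeas.stronglyMeasurable.integral_prod_right'.measurable
  set g : X → ℂ := fun x => f x / Real.sqrt (d x)
  have hg : MemLp g 2 P :=
    hf.div_ofReal_of_le hdm.sqrt (Real.sqrt_pos.2 hκl) fun x => Real.sqrt_le_sqrt (hdl x)
  have hintegrand (x y : X) :
      ((k x y / (Real.sqrt (d x) * Real.sqrt (d y)) : ℝ) : ℂ) * f y * conj (f x) =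
        (k x y : ℂ) * conj (g x) * g y := by
    simp only [g, map_div₀, Complex.conj_ofReal]
    push_cast
    ring
  simp_rw [hintegrand]
  rw [integral_integral (integrable_kernel_prod hkC hbdd (hg.integrable one_le_two))]
  exact hkpsd.re_integral_prod_nonneg hkC hbdd hg
end

section
/- Let ξ₁,…,ξₙ be independent zero-mean random variables with values in a separable Hilbert space H such that ‖ξᵢ‖_H ≤ C almost surely for all i. Then for every τ > 0, with probability at least 1 - 2e^{-τ}, ‖(1/n)∑ᵢ ξᵢ‖_H ≤ C√(2τ)/√n. -/
/-!
For `‖v‖ ≤ C`, `cosh ‖x + v‖` is at most `cosh ‖x‖ * cosh C` plus a term linear in `v`. Indeed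
`‖x + v‖²` lies between `(‖x‖ - ‖v‖)²` and `(‖x‖ + ‖v‖)²`, so convexity of `t ↦ cosh √t` bounds
`cosh ‖x + v‖` by a chord, and monotonicity of `sinh s / s` lets `‖v‖` be replaced by `C`.
Averaging over a centred law kills the linear term, so by independence
`E cosh (λ ‖ξ₁ + ⋯ + ξₙ‖) ≤ cosh (λ C) ^ n ≤ exp (n λ² C² / 2)`. Markov's inequality together with
`exp / 2 ≤ cosh` and the optimal `λ` gives the tail bound `2 exp (-t² / (2 n C²))`.
-/

open MeasureTheory ProbabilityTheory Real Set

lemma convexOn_sinh : ConvexOn ℝ (Ici 0) sinh := by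
  refine MonotoneOn.convexOn_of_deriv (convex_Ici 0) continuous_sinh.continuousOn
    differentiable_sinh.differentiableOn ?_
  intro x hx y hy hxy
  rw [interior_Ici] at hx hy
  rw [Real.deriv_sinh]
  exact cosh_le_cosh.2 (by rwa [abs_of_pos hx, abs_of_pos hy])

lemma monotoneOn_sinh_div_self : MonotoneOn (fun x => sinh x / x) (Ioi 0) := by
  intro x hx y hy hxy
  simpa using convexOn_sinh.secant_mono self_mem_Ici hx.out.le hy.out.le
    (ne_of_gt hx) (ne_of_gt hy) hxy

lemma convexOn_cosh_sqrt : ConvexOn ℝ (Ici 0) (fun t => cosh √t) := by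
  have hderiv : ∀ t : ℝ, 0 < t → HasDerivAt (fun t => cosh √t) (sinh √t / √t / 2) t := by
    intro t ht
    refine ((hasDerivAt_cosh √t).comp t (hasDerivAt_sqrt ht.ne')).congr_deriv ?_
    field_simp
  refine MonotoneOn.convexOn_of_deriv (convex_Ici 0) (by fun_prop) ?_ ?_
  · rw [interior_Ici]
    exact fun t ht => (hderiv t ht).differentiableAt.differentiableWithinAt
  · rw [interior_Ici]
    intro x hx y hy hxy
    rw [(hderiv x hx).deriv, (hderiv y hy).deriv]
    gcongr ?_ / 2
    exact monotoneOn_sinh_div_self (sqrt_pos.2 hx) (sqrt_pos.2 hy) (sqrt_le_sqrt hxy)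

lemma cosh_sqrt_le_of_abs_le {a b u : ℝ} (ha : 0 < a) (hb : 0 < b) (hu : |u| ≤ a * b) :
    cosh √(a ^ 2 + 2 * u + b ^ 2) ≤ cosh a * cosh b + (sinh a / a) * (sinh b / b) * u := by
  obtain ⟨θ, hθ⟩ : ∃ θ, θ * (2 * (a * b)) = a * b + u :=
    ⟨_, div_mul_cancel₀ _ (by positivity)⟩
  have hθ0 : 0 ≤ θ := by nlinarith [mul_pos ha hb, neg_abs_le u]
  have hθ1 : 0 ≤ 1 - θ := by nlinarith [mul_pos ha hb, le_abs_self u]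
  have hcomb : θ * (a + b) ^ 2 + (1 - θ) * (a - b) ^ 2 = a ^ 2 + 2 * u + b ^ 2 := by
    linear_combination 2 * hθ
  have hconv := convexOn_cosh_sqrt.2 (sq_nonneg (a + b)) (sq_nonneg (a - b)) hθ0 hθ1
    (add_sub_cancel θ 1)
  simp only [smul_eq_mul, hcomb, sqrt_sq_eq_abs, cosh_abs] at hconv
  refine hconv.trans_eq ?_
  rw [cosh_add, cosh_sub]
  field_simp
  linear_combination sinh a * sinh b * hθ

lemma cosh_mul_cosh_add_le_of_le {a b C u : ℝ} (ha : 0 ≤ a) (hb : 0 < b) (hbC : b ≤ C)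
    (hu : -(a * b) ≤ u) :
    cosh a * cosh b + (sinh a / a) * (sinh b / b) * u ≤
      cosh a * cosh C + (sinh a / a) * (sinh C / C) * u := by
  have hC : 0 < C := hb.trans_le hbC
  -- `e⁻ᵇ = cosh b - sinh b` lies below the chord of `t ↦ e⁻ᵗ` over `[0, C]`
  have hchord : b * sinh C / C - sinh b ≤ cosh C - cosh b := by
    have h := exp_mul_le_cosh_add_mul_sinh (t := -(b / C))
      (by rw [abs_neg, abs_of_nonneg (by positivity)]; exact div_le_one_of_le₀ hbC hC.le) C
    rw [neg_mul, div_mul_cancel₀ b hC.ne', ← cosh_sub_sinh] at h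
    linarith [mul_div_right_comm b (sinh C) C]
  have hcosh : cosh b ≤ cosh C := cosh_le_cosh.2 (by rwa [abs_of_pos hb, abs_of_pos hC])
  have hslope : sinh b / b ≤ sinh C / C := monotoneOn_sinh_div_self hb hC hbC
  have hsinh_a : 0 ≤ sinh a := sinh_nonneg_iff.2 ha
  have hp : -(b * sinh a) ≤ sinh a / a * u := by
    rcases ha.eq_or_lt with rfl | ha
    · simp
    · calc -(b * sinh a) = sinh a / a * -(a * b) := by field_simp
        _ ≤ sinh a / a * u := by gcongr
  have hb_slope : b * (sinh C / C - sinh b / b) = b * sinh C / C - sinh b := by field_simp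
  nlinarith [sinh_lt_cosh a, mul_le_mul_of_nonneg_left (sub_nonneg.2 hslope) (sub_nonneg.2 hp)]

section NormedAddCommGroup

variable {E : Type*} [NormedAddCommGroup E]

lemma cosh_norm_add_le_exp_mul (x : E) {y : E} {C : ℝ} (hy : ‖y‖ ≤ C) :
    cosh ‖x + y‖ ≤ exp C * cosh ‖x‖ := by
  have hC : 0 ≤ C := (norm_nonneg y).trans hy
  calc cosh ‖x + y‖ ≤ cosh (‖x‖ + C) := by
        refine cosh_le_cosh.2 ?_
        rw [abs_of_nonneg (norm_nonneg _), abs_of_nonneg (by positivity)]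
        exact (norm_add_le x y).trans (by gcongr)
    _ ≤ exp C * cosh ‖x‖ := by
        rw [cosh_add, ← cosh_add_sinh C]
        nlinarith [sinh_lt_cosh ‖x‖, sinh_nonneg_iff.2 hC]

lemma integrable_cosh_norm_add [MeasurableSpace E] [BorelSpace E] [SecondCountableTopology E]
    {Ω : Type*} [MeasurableSpace Ω] {μ : Measure Ω} {X Y : Ω → E}
    (hX : AEMeasurable X μ) (hY : AEMeasurable Y μ)
    (hXint : Integrable (fun ω => cosh ‖X ω‖) μ) {C : ℝ} (hYC : ∀ᵐ ω ∂μ, ‖Y ω‖ ≤ C) :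
    Integrable (fun ω => cosh ‖X ω + Y ω‖) μ := by
  refine (hXint.const_mul (exp C)).mono' (by fun_prop) ?_
  filter_upwards [hYC] with ω hω
  rw [norm_of_nonneg (cosh_pos _).le]
  exact cosh_norm_add_le_exp_mul (X ω) hω

end NormedAddCommGroup

section InnerProductSpace

variable {H : Type*} [NormedAddCommGroup H] [InnerProductSpace ℝ H]

lemma cosh_norm_add_le (x y : H) :
    cosh ‖x + y‖ ≤
      cosh ‖x‖ * cosh ‖y‖ + (sinh ‖x‖ / ‖x‖) * (sinh ‖y‖ / ‖y‖) * inner ℝ x y := by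
  rcases eq_or_ne x 0 with rfl | hx
  · simp
  rcases eq_or_ne y 0 with rfl | hy
  · simp
  rw [← sqrt_sq (norm_nonneg (x + y)), norm_add_sq_real]
  exact cosh_sqrt_le_of_abs_le (norm_pos_iff.2 hx) (norm_pos_iff.2 hy)
    (abs_real_inner_le_norm x y)

lemma cosh_norm_add_le_of_norm_le (x : H) {y : H} {C : ℝ} (hy : ‖y‖ ≤ C) :
    cosh ‖x + y‖ ≤ cosh ‖x‖ * cosh C + (sinh ‖x‖ / ‖x‖) * (sinh C / C) * inner ℝ x y := by
  rcases eq_or_ne y 0 with rfl | hy0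
  · simpa using le_mul_of_one_le_right (cosh_pos _).le (one_le_cosh C)
  exact (cosh_norm_add_le x y).trans <| cosh_mul_cosh_add_le_of_le (norm_nonneg x)
    (norm_pos_iff.2 hy0) hy (neg_le_of_abs_le (abs_real_inner_le_norm x y))

variable [MeasurableSpace H] [BorelSpace H] [SecondCountableTopology H] [CompleteSpace H]

lemma integral_cosh_norm_add_le (ν : Measure H) [IsProbabilityMeasure ν] {C : ℝ}
    (hC : ∀ᵐ y ∂ν, ‖y‖ ≤ C) (hmean : ∫ y, y ∂ν = 0) (x : H) :
    ∫ y, cosh ‖x + y‖ ∂ν ≤ cosh ‖x‖ * cosh C := by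
  have hid : Integrable (fun y => y) ν := .of_bound aestronglyMeasurable_id C hC
  have hcosh : Integrable (fun y => cosh ‖x + y‖) ν :=
    .of_bound (by fun_prop) (exp C * cosh ‖x‖) <| by
      filter_upwards [hC] with y hy
      rw [norm_of_nonneg (cosh_pos _).le]
      exact cosh_norm_add_le_exp_mul x hy
  calc ∫ y, cosh ‖x + y‖ ∂ν
      ≤ ∫ y, cosh ‖x‖ * cosh C + (sinh ‖x‖ / ‖x‖) * (sinh C / C) * inner ℝ x y ∂ν :=
        integral_mono_ae hcosh ((integrable_const _).add ((hid.const_inner x).const_mul _))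
          (by filter_upwards [hC] with y hy using cosh_norm_add_le_of_norm_le x hy)
    _ = cosh ‖x‖ * cosh C := by
        rw [integral_add (integrable_const _) ((hid.const_inner x).const_mul _), integral_const,
          integral_const_mul, integral_inner hid, hmean]
        simp

namespace ProbabilityTheory

variable {Ω : Type*} [MeasurableSpace Ω] {μ : Measure Ω} [IsProbabilityMeasure μ]

lemma IndepFun.integral_cosh_norm_add_le {X Y : Ω → H} (hXY : IndepFun X Y μ)
    (hX : AEMeasurable X μ) (hY : AEMeasurable Y μ)
    (hXint : Integrable (fun ω => cosh ‖X ω‖) μ) {C : ℝ} (hYC : ∀ᵐ ω ∂μ, ‖Y ω‖ ≤ C)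
    (hYmean : ∫ ω, Y ω ∂μ = 0) :
    ∫ ω, cosh ‖X ω + Y ω‖ ∂μ ≤ cosh C * ∫ ω, cosh ‖X ω‖ ∂μ := by
  have := Measure.isProbabilityMeasure_map (μ := μ) hY
  have hf : Continuous fun p : H × H => cosh ‖p.1 + p.2‖ := by fun_prop
  have hprod := hXY.map_prod_eq_prod_map_map hX hY
  have hint : Integrable (fun p : H × H => cosh ‖p.1 + p.2‖) ((μ.map X).prod (μ.map Y)) := by
    rw [← hprod, integrable_map_measure hf.aestronglyMeasurable (hX.prodMk hY)]
    exact integrable_cosh_norm_add hX hY hXint hYC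
  have hYC' : ∀ᵐ y ∂(μ.map Y), ‖y‖ ≤ C :=
    (ae_map_iff hY (measurableSet_le (by fun_prop) measurable_const)).2 hYC
  have hYmean' : ∫ y, y ∂(μ.map Y) = 0 := (integral_map hY aestronglyMeasurable_id).trans hYmean
  calc ∫ ω, cosh ‖X ω + Y ω‖ ∂μ
      = ∫ x, ∫ y, cosh ‖x + y‖ ∂(μ.map Y) ∂(μ.map X) := by
        rw [← integral_prod _ hint, ← hprod, integral_map (hX.prodMk hY) hf.aestronglyMeasurable]
    _ ≤ ∫ x, cosh ‖x‖ * cosh C ∂(μ.map X) := by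
        refine integral_mono_of_nonneg (ae_of_all _ fun x => integral_nonneg fun y => ?_) ?_
          (ae_of_all _ fun x => _root_.integral_cosh_norm_add_le (μ.map Y) hYC' hYmean' x)
        · exact (cosh_pos _).le
        · rw [integrable_map_measure (by fun_prop) hX]
          exact hXint.mul_const _
    _ = cosh C * ∫ ω, cosh ‖X ω‖ ∂μ := by
        rw [integral_mul_const, integral_map hX (by fun_prop), mul_comm]

lemma iIndepFun.integral_cosh_norm_sum_le {ι : Type*} {ξ : ι → Ω → H} (hindep : iIndepFun ξ μ)
    (hmeas : ∀ i, AEMeasurable (ξ i) μ) (hmean : ∀ i, ∫ ω, ξ i ω ∂μ = 0) {C : ℝ}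
    (hbound : ∀ i, ∀ᵐ ω ∂μ, ‖ξ i ω‖ ≤ C) (s : Finset ι) :
    Integrable (fun ω => cosh ‖∑ i ∈ s, ξ i ω‖) μ ∧
      ∫ ω, cosh ‖∑ i ∈ s, ξ i ω‖ ∂μ ≤ cosh C ^ s.card := by
  classical
  induction s using Finset.induction_on with
  | empty => simp
  | insert i s hi ih =>
    obtain ⟨hint, hle⟩ := ih
    have hsum : AEMeasurable (fun ω => ∑ j ∈ s, ξ j ω) μ :=
      s.aemeasurable_fun_sum fun j _ => hmeas j
    have hindep' : IndepFun (fun ω => ∑ j ∈ s, ξ j ω) (ξ i) μ := by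
      simpa only [Finset.sum_fn] using hindep.indepFun_finsetSum_of_notMem₀ hmeas hi
    simp only [Finset.sum_insert hi, Finset.card_insert_of_notMem hi, add_comm (ξ i _)]
    refine ⟨integrable_cosh_norm_add hsum (hmeas i) hint (hbound i), ?_⟩
    calc ∫ ω, cosh ‖∑ j ∈ s, ξ j ω + ξ i ω‖ ∂μ
        ≤ cosh C * ∫ ω, cosh ‖∑ j ∈ s, ξ j ω‖ ∂μ :=
          hindep'.integral_cosh_norm_add_le hsum (hmeas i) hint (hbound i) (hmean i)
      _ ≤ cosh C ^ (s.card + 1) := by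
          rw [pow_succ']
          exact mul_le_mul_of_nonneg_left hle (cosh_pos C).le

lemma iIndepFun.measureReal_lt_norm_sum_le {ι : Type*} [Fintype ι] {ξ : ι → Ω → H}
    (hindep : iIndepFun ξ μ) (hmeas : ∀ i, AEMeasurable (ξ i) μ)
    (hmean : ∀ i, ∫ ω, ξ i ω ∂μ = 0) {C : ℝ} (hbound : ∀ i, ∀ᵐ ω ∂μ, ‖ξ i ω‖ ≤ C)
    {t : ℝ} (ht : 0 ≤ t) :
    μ.real {ω | t < ‖∑ i, ξ i ω‖} ≤ 2 * exp (-(t ^ 2 / (2 * Fintype.card ι * C ^ 2))) := by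
  set n := Fintype.card ι
  -- the optimal exponential rate in the Chernoff bound below
  set l := t / (n * C ^ 2)
  have hl : 0 ≤ l := by positivity
  obtain ⟨hint, hmom⟩ := (hindep.comp (fun _ x => l • x) fun _ => measurable_const_smul l)
    |>.integral_cosh_norm_sum_le (fun i => (hmeas i).const_smul l)
      (fun i => by simp [integral_smul, hmean i]) (C := l * C)
      (fun i => by
        filter_upwards [hbound i] with ω h
        rw [Function.comp_apply, norm_smul, norm_of_nonneg hl]
        gcongr) Finset.univ
  simp only [Function.comp_apply, ← Finset.smul_sum, norm_smul, norm_of_nonneg hl,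
    Finset.card_univ] at hint hmom
  have hmarkov := mul_meas_ge_le_integral_of_nonneg (ae_of_all _ fun ω => (cosh_pos _).le) hint
    (cosh (l * t))
  have hexponent : n * ((l * C) ^ 2 / 2) - l * t = -(t ^ 2 / (2 * n * C ^ 2)) := by
    rcases eq_or_ne ((n : ℝ) * C ^ 2) 0 with h | h
    · simp [l, h, mul_assoc]
    · simp only [l]
      field_simp
      ring
  calc μ.real {ω | t < ‖∑ i, ξ i ω‖}
      ≤ μ.real {ω | cosh (l * t) ≤ cosh (l * ‖∑ i, ξ i ω‖)} := by
        refine measureReal_mono fun ω hω => cosh_le_cosh.2 ?_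
        rw [abs_of_nonneg (by positivity), abs_of_nonneg (by positivity)]
        exact mul_le_mul_of_nonneg_left (le_of_lt hω) hl
    _ ≤ cosh (l * C) ^ n / cosh (l * t) := by
        rw [le_div_iff₀ (cosh_pos _)]
        linarith
    _ ≤ exp ((l * C) ^ 2 / 2) ^ n / (exp (l * t) / 2) := by
        gcongr
        · exact cosh_le_exp_half_sq _
        · rw [cosh_eq]
          linarith [exp_pos (-(l * t))]
    _ = 2 * exp (-(t ^ 2 / (2 * n * C ^ 2))) := by
        rw [← exp_nat_mul, ← hexponent, exp_sub]
        ring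

end ProbabilityTheory

end InnerProductSpace

/-- Concentration of bounded zero-mean independent random vectors in a separable Hilbert
space: with probability at least `1 - 2e^{-τ}`, `‖(1/n)∑ ξᵢ‖ ≤ C√(2τ)/√n`. -/
theorem stmt13 {Ω H : Type*} [MeasurableSpace Ω] (μ : Measure Ω) [IsProbabilityMeasure μ]
    [NormedAddCommGroup H] [InnerProductSpace ℝ H] [CompleteSpace H]
    [TopologicalSpace.SeparableSpace H] [MeasurableSpace H] [BorelSpace H]
    (n : ℕ) (ξ : Fin n → Ω → H)
    (hmeas : ∀ i, Measurable (ξ i))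
    (hindep : iIndepFun ξ μ)
    (hmean : ∀ i, ∫ ω, ξ i ω ∂μ = 0)
    (C : ℝ) (hbound : ∀ i, ∀ᵐ ω ∂μ, ‖ξ i ω‖ ≤ C)
    (τ : ℝ) (hτ : 0 < τ) :
    1 - 2 * Real.exp (-τ) ≤
      (μ {ω | ‖(n : ℝ)⁻¹ • ∑ i, ξ i ω‖ ≤ C * Real.sqrt (2 * τ) / Real.sqrt n}).toReal := by
  have := UniformSpace.secondCountable_of_separable H
  set A := {ω | ‖(n : ℝ)⁻¹ • ∑ i, ξ i ω‖ ≤ C * √(2 * τ) / √n}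
  have hA : MeasurableSet A := measurableSet_le (by fun_prop) measurable_const
  suffices μ.real Aᶜ ≤ 2 * exp (-τ) by
    rw [probReal_compl_eq_one_sub hA] at this
    change _ ≤ μ.real A
    linarith
  rcases Nat.eq_zero_or_pos n with rfl | hn
  · simp [A, exp_nonneg]
  obtain ⟨ω₀, hω₀⟩ := (hbound ⟨0, hn⟩).exists
  rcases ((norm_nonneg _).trans hω₀).eq_or_lt with rfl | hC
  · have hzero : ∀ᵐ ω ∂μ, ∀ i, ξ i ω = 0 := by
      simpa only [ae_all_iff, norm_le_zero_iff] using hbound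
    rw [(measureReal_eq_zero_iff).2 (measure_eq_zero_iff_ae_notMem.2 ?_)]
    · positivity
    filter_upwards [hzero] with ω hω
    simp [A, hω]
  have hn' : (0 : ℝ) < n := Nat.cast_pos.2 hn
  set t := n * (C * √(2 * τ) / √n)
  have hAc : Aᶜ = {ω | t < ‖∑ i, ξ i ω‖} := by
    ext ω
    simp only [A, Set.mem_compl_iff, Set.mem_ofPred_eq, not_le, norm_smul, norm_inv,
      RCLike.norm_natCast, inv_mul_eq_div, lt_div_iff₀ hn', t, mul_comm]
  have hrate : t ^ 2 / (2 * Fintype.card (Fin n) * C ^ 2) = τ := by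
    simp only [t, Fintype.card_fin, div_pow, mul_pow, sq_sqrt hn'.le,
      sq_sqrt (by positivity : (0 : ℝ) ≤ 2 * τ)]
    field_simp
  rw [hAc, ← hrate]
  exact hindep.measureReal_lt_norm_sum_le (fun i => (hmeas i).aemeasurable) hmean hbound
    (by positivity)
end

section
/- Let W : ℂ^K → L²(X,ℙ) and V̂₁ : ℂ^K → L²(X,ℙ) be injective bounded operators with the same K-dimensional range, where W has orthonormal columns in L²(X,ℙ) (W*W = I). Suppose the singular value decomposition W*V̂₁ = AΣB* has all singular values < 2, and that the columns g_i of WA satisfy ⟨ĝ_i, g_i⟩ = 1/‖g_i‖_{L²(ℙₙ)} where ĝ_i are the columns of V̂₁B, which are orthonormal in L²(X,ℙₙ). Then for the unitary Q = AB*: ‖Q - W*V̂₁‖₂ = max_i |1 - 1/‖g_i‖_{L²(ℙₙ)}| ≤ 2 max_i |1 - ‖g_i‖²_{L²(ℙₙ)}|. -/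
/-!
Writing `W*V̂₁ = AΣB*`, the difference `Q - W*V̂₁ = A (I - Σ) B*` is a diagonal matrix between
two unitaries, and unitaries preserve the spectral norm, so its norm is `maxᵢ |1 - sᵢ|`.
Since `sᵢ = 1/Nᵢ < 2` forces `Nᵢ > 1/2`, the bound follows from
`|1 - 1/x| = |1 - x²| / (x (1 + x)) ≤ 2 |1 - x²|` for `x ≥ 1/2`.
-/

open scoped ComplexInnerProductSpace

theorem pi_norm_eq_iSup_norm {ι E : Type*} [Fintype ι] [SeminormedAddCommGroup E] (f : ι → E) :
    ‖f‖ = ⨆ i, ‖f i‖ :=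
  le_antisymm
    ((pi_norm_le_iff_of_nonneg (Real.iSup_nonneg fun i => norm_nonneg (f i))).2
      fun i => Finite.le_ciSup_of_le i le_rfl)
    (Real.iSup_le (norm_le_pi_norm f) (norm_nonneg f))

namespace Matrix

open scoped Matrix.Norms.L2Operator

variable {n 𝕜 : Type*} [Fintype n] [DecidableEq n] [RCLike 𝕜]

theorem norm_toEuclideanCLM_mul_conjTranspose_sub_svd {A B : Matrix n n 𝕜}
    (hA : A ∈ unitaryGroup n 𝕜) (hB : B ∈ unitaryGroup n 𝕜) (σ : n → ℝ) :
    ‖toEuclideanCLM (𝕜 := 𝕜) (A * Bᴴ - A * diagonal (fun i => (σ i : 𝕜)) * Bᴴ)‖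
      = ⨆ i, |1 - σ i| := by
  have hB' : Bᴴ ∈ unitaryGroup n 𝕜 := Unitary.star_mem hB
  have hdiff : A * Bᴴ - A * diagonal (fun i => (σ i : 𝕜)) * Bᴴ
      = A * diagonal (fun i => ((1 - σ i : ℝ) : 𝕜)) * Bᴴ := by
    have hone_sub :
        diagonal (fun i => ((1 - σ i : ℝ) : 𝕜)) = 1 - diagonal (fun i => (σ i : 𝕜)) := by
      simp only [RCLike.ofReal_sub, RCLike.ofReal_one, ← diagonal_one, diagonal_sub]
    rw [hone_sub, mul_sub, sub_mul, mul_one]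
  rw [l2_opNorm_toEuclideanCLM, hdiff, CStarRing.norm_mul_mem_unitary _ hB',
    CStarRing.norm_mem_unitary_mul _ hA, l2_opNorm_diagonal, pi_norm_eq_iSup_norm]
  simp only [RCLike.norm_ofReal]

end Matrix

theorem abs_one_sub_inv_le_two_mul_abs_one_sub_sq {x : ℝ} (hx : 1 / 2 ≤ x) :
    |1 - x⁻¹| ≤ 2 * |1 - x ^ 2| := by
  have hx0 : 0 < x := by linarith
  calc |1 - x⁻¹| = |x ^ 2 - 1| * (x * (1 + x))⁻¹ := by
        rw [← abs_of_pos (inv_pos.2 (by positivity : 0 < x * (1 + x))), ← abs_mul]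
        congr 1
        field_simp
        ring
    _ ≤ |x ^ 2 - 1| * 2 := by
        gcongr
        rw [inv_le_comm₀ (by positivity) two_pos]
        nlinarith
    _ = 2 * |1 - x ^ 2| := by rw [abs_sub_comm, mul_comm]

theorem stmt17_general (K : ℕ)
    (A B : Matrix (Fin K) (Fin K) ℂ)
    (hA : A ∈ Matrix.unitaryGroup (Fin K) ℂ) (hB : B ∈ Matrix.unitaryGroup (Fin K) ℂ)
    (s N : Fin K → ℝ) (hs2 : ∀ i, s i < 2) (hNpos : ∀ i, 0 < N i)
    (hsN : ∀ i, s i = 1 / N i)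
    (WsV : Matrix (Fin K) (Fin K) ℂ)
    (hSVD : WsV = A * Matrix.diagonal (fun i => (s i : ℂ)) * B.conjTranspose) :
    ‖Matrix.toEuclideanCLM (𝕜 := ℂ) (A * B.conjTranspose - WsV)‖ = (⨆ i, |1 - s i|) ∧
      (⨆ i, |1 - s i|) ≤ 2 * ⨆ i, |1 - N i ^ 2| := by
  subst hSVD
  refine ⟨Matrix.norm_toEuclideanCLM_mul_conjTranspose_sub_svd hA hB s, ?_⟩
  have hN : ∀ i, 1 / 2 ≤ N i := fun i => by
    have := hs2 i
    rw [hsN i, div_lt_iff₀ (hNpos i)] at this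
    linarith
  rw [Real.mul_iSup_of_nonneg two_pos.le]
  refine Finite.ciSup_mono fun i => ?_
  rw [hsN i, one_div]
  exact abs_one_sub_inv_le_two_mul_abs_one_sub_sq (hN i)

/-- If `W*V̂₁ = AΣB*` is an SVD with all singular values `sᵢ = 1/Nᵢ < 2` (where
`Nᵢ = ‖gᵢ‖_{L²(ℙₙ)} > 0`), then for the unitary `Q = AB*`:
`‖Q - W*V̂₁‖₂ = maxᵢ |1 - sᵢ| ≤ 2 maxᵢ |1 - Nᵢ²|`. -/
theorem stmt17 {F : Type*} [NormedAddCommGroup F] [InnerProductSpace ℂ F] [CompleteSpace F]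
    (K : ℕ)
    (W Vh : EuclideanSpace ℂ (Fin K) →L[ℂ] F)
    (hW : ContinuousLinearMap.adjoint W ∘L W = 1)
    (hrange : LinearMap.range (W : EuclideanSpace ℂ (Fin K) →ₗ[ℂ] F)
      = LinearMap.range (Vh : EuclideanSpace ℂ (Fin K) →ₗ[ℂ] F))
    (hinj : Function.Injective ⇑Vh)
    (A B : Matrix (Fin K) (Fin K) ℂ)
    (hA : A ∈ Matrix.unitaryGroup (Fin K) ℂ) (hB : B ∈ Matrix.unitaryGroup (Fin K) ℂ)
    (s N : Fin K → ℝ) (hs2 : ∀ i, s i < 2) (hNpos : ∀ i, 0 < N i)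
    (hsN : ∀ i, s i = 1 / N i)
    (WsV : Matrix (Fin K) (Fin K) ℂ)
    (hWsV : ∀ i j, WsV i j
      = ⟪W (EuclideanSpace.single i 1), Vh (EuclideanSpace.single j 1)⟫)
    (hSVD : WsV = A * Matrix.diagonal (fun i => (s i : ℂ)) * B.conjTranspose) :
    ‖Matrix.toEuclideanCLM (𝕜 := ℂ) (A * B.conjTranspose - WsV)‖ = (⨆ i, |1 - s i|) ∧
      (⨆ i, |1 - s i|) ≤ 2 * ⨆ i, |1 - N i ^ 2| :=
  stmt17_general K A B hA hB s N hs2 hNpos hsN WsV hSVD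
end
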